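/- Let G be a finite group of d×d unitary matrices. The average channel 𝓜_G is ergodic (its Cesàro averages of iterates converge to a single fixed density matrix independent of the initial state) if and only if 𝓜_G equals the completely depolarizing channel Ω(a) = (Tr(a)/d)·I. -/

import Mathlib

open Matrix BigOperators Filter ComplexOrder

/-- The positive semidefinite square root, as `Matrix.PosSemidef.sqrt` was defined in Mathlib
(Dec 2024); it has since been removed. -/
noncomputable def Matrix.PosSemidef.sqrt {n 𝕜 : Type*} [Fintype n] [DecidableEq n] [RCLike 𝕜]
    {A : Matrix n n 𝕜} (hA : A.PosSemidef) : Matrix n n 𝕜 :=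
  hA.1.eigenvectorUnitary.1 * diagonal ((↑) ∘ (√·) ∘ hA.1.eigenvalues) *
    (star hA.1.eigenvectorUnitary : Matrix n n 𝕜)

/-- Trace norm: `Tr √(aᴴa)`, the sum of singular values. -/
noncomputable def traceNorm {d : ℕ} (a : Matrix (Fin d) (Fin d) ℂ) : ℝ :=
  ((Matrix.posSemidef_conjTranspose_mul_self a).sqrt.trace).re

/-- Absolute value `√(bᴴb)` of a matrix. -/
noncomputable def matAbs {d : ℕ} (b : Matrix (Fin d) (Fin d) ℂ) : Matrix (Fin d) (Fin d) ℂ :=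
  (Matrix.posSemidef_conjTranspose_mul_self b).sqrt

/-- Positive part `b₊ = (|b| + b)/2` (for `b` self-adjoint). -/
noncomputable def matPosPart {d : ℕ} (b : Matrix (Fin d) (Fin d) ℂ) : Matrix (Fin d) (Fin d) ℂ :=
  (1/2 : ℂ) • (matAbs b + b)

/-- Negative part `b₋ = (|b| - b)/2` (for `b` self-adjoint). -/
noncomputable def matNegPart {d : ℕ} (b : Matrix (Fin d) (Fin d) ℂ) : Matrix (Fin d) (Fin d) ℂ :=
  (1/2 : ℂ) • (matAbs b - b)

/-- Real part `(a + aᴴ)/2` of a matrix. -/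
noncomputable def reM {d : ℕ} (a : Matrix (Fin d) (Fin d) ℂ) : Matrix (Fin d) (Fin d) ℂ :=
  (1/2 : ℂ) • (a + aᴴ)

/-- Imaginary part `(a - aᴴ)/(2i)` of a matrix. -/
noncomputable def imM {d : ℕ} (a : Matrix (Fin d) (Fin d) ℂ) : Matrix (Fin d) (Fin d) ℂ :=
  (-(Complex.I)/2) • (a - aᴴ)

/-- A density matrix: positive semidefinite with trace 1. -/
def IsDensity {d : ℕ} (ρ : Matrix (Fin d) (Fin d) ℂ) : Prop :=
  ρ.PosSemidef ∧ ρ.trace = 1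

/-- Trace preservation for a linear map on matrices. -/
def IsTracePreserving {d : ℕ}
    (𝓜 : Matrix (Fin d) (Fin d) ℂ →ₗ[ℂ] Matrix (Fin d) (Fin d) ℂ) : Prop :=
  ∀ a, (𝓜 a).trace = a.trace

/-- Complete positivity: all the ampliations `𝓜 ⊗ id_k` preserve positive semidefiniteness. -/
def IsCompletelyPositive {d : ℕ}
    (𝓜 : Matrix (Fin d) (Fin d) ℂ →ₗ[ℂ] Matrix (Fin d) (Fin d) ℂ) : Prop :=
  ∀ (k : ℕ) (M : Matrix (Fin d × Fin k) (Fin d × Fin k) ℂ), M.PosSemidef →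
    (Matrix.of fun (p q : Fin d × Fin k) =>
      𝓜 (Matrix.of fun a b => M (a, p.2) (b, q.2)) p.1 q.1).PosSemidef

/-- The rank-one projection `|ξ⟩⟨ξ|`. -/
noncomputable def proj {d : ℕ} (ξ : Fin d → ℂ) : Matrix (Fin d) (Fin d) ℂ :=
  Matrix.vecMulVec ξ (star ξ)

/-- The TV-norm `Tr (Re a)₊ + Tr (Re a)₋ + Tr (Im a)₊ + Tr (Im a)₋`. -/
noncomputable def tvNorm {d : ℕ} (a : Matrix (Fin d) (Fin d) ℂ) : ℝ :=
  ((matPosPart (reM a)).trace).re + ((matNegPart (reM a)).trace).re +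
    ((matPosPart (imM a)).trace).re + ((matNegPart (imM a)).trace).re

/-- The completely depolarizing channel `Ω(a) = (Tr a / d) • I`. -/
noncomputable def depol (d : ℕ) : Matrix (Fin d) (Fin d) ℂ →ₗ[ℂ] Matrix (Fin d) (Fin d) ℂ where
  toFun a := (a.trace / d) • (1 : Matrix (Fin d) (Fin d) ℂ)
  map_add' a b := by simp [Matrix.trace_add, add_div, add_smul]
  map_smul' c a := by simp [Matrix.trace_smul, smul_smul, mul_div_assoc]


/-- The average channel of a finite group of unitaries. -/
noncomputable def avgChannel {d : ℕ} (G : Subgroup (Matrix.unitaryGroup (Fin d) ℂ))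
    [Fintype G] (a : Matrix (Fin d) (Fin d) ℂ) : Matrix (Fin d) (Fin d) ℂ :=
  ((Fintype.card G : ℂ))⁻¹ • ∑ U : G, (U : Matrix (Fin d) (Fin d) ℂ) * a *
    ((U : Matrix (Fin d) (Fin d) ℂ))ᴴ

section Aux
variable {d : ℕ} (G : Subgroup (Matrix.unitaryGroup (Fin d) ℂ)) [Fintype G]

noncomputable def avgL : Matrix (Fin d) (Fin d) ℂ →ₗ[ℂ] Matrix (Fin d) (Fin d) ℂ where
  toFun := avgChannel G
  map_add' a b := by
    simp only [avgChannel, Matrix.mul_add, Matrix.add_mul, Finset.sum_add_distrib, smul_add]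
  map_smul' c a := by
    simp only [avgChannel, RingHom.id_apply, Matrix.mul_smul, Matrix.smul_mul,
      ← Finset.smul_sum, smul_comm c]

lemma avg_sum_invariant (a : Matrix (Fin d) (Fin d) ℂ) (V : G) :
    (V : Matrix (Fin d) (Fin d) ℂ) *
      (∑ U : G, (U : Matrix (Fin d) (Fin d) ℂ) * a * ((U : Matrix (Fin d) (Fin d) ℂ))ᴴ) *
        ((V : Matrix (Fin d) (Fin d) ℂ))ᴴ
    = ∑ U : G, (U : Matrix (Fin d) (Fin d) ℂ) * a * ((U : Matrix (Fin d) (Fin d) ℂ))ᴴ := by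
  rw [Matrix.mul_sum, Finset.sum_mul]
  refine Fintype.sum_equiv (Equiv.mulLeft V) _ _ ?_
  intro U
  have hc : ((↑(V * U) : Matrix.unitaryGroup (Fin d) ℂ) : Matrix (Fin d) (Fin d) ℂ)
      = (V : Matrix (Fin d) (Fin d) ℂ) * (U : Matrix (Fin d) (Fin d) ℂ) := by push_cast; rfl
  simp only [Equiv.coe_mulLeft, hc, Matrix.conjTranspose_mul]
  noncomm_ring

lemma avg_idem (a : Matrix (Fin d) (Fin d) ℂ) :
    avgChannel G (avgChannel G a) = avgChannel G a := by
  have hcard : (Fintype.card G : ℂ) ≠ 0 := Nat.cast_ne_zero.mpr Fintype.card_ne_zero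
  conv_lhs => rw [avgChannel]
  simp only [avgChannel, Matrix.mul_smul, Matrix.smul_mul, ← Finset.smul_sum,
    avg_sum_invariant G a]
  rw [Finset.sum_const, Finset.card_univ, smul_smul, ← Nat.cast_smul_eq_nsmul ℂ, smul_smul]
  congr 1
  field_simp

lemma avg_one : avgChannel G (1 : Matrix (Fin d) (Fin d) ℂ) = 1 := by
  have hcard : (Fintype.card G : ℂ) ≠ 0 := Nat.cast_ne_zero.mpr Fintype.card_ne_zero
  have hU : ∀ U : G, (U : Matrix (Fin d) (Fin d) ℂ) * (1:Matrix (Fin d) (Fin d) ℂ) *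
      ((U : Matrix (Fin d) (Fin d) ℂ))ᴴ = 1 := by
    intro U
    rw [Matrix.mul_one, ← Matrix.star_eq_conjTranspose]
    exact (Unitary.mem_iff.mp (U : Matrix.unitaryGroup (Fin d) ℂ).2).2
  simp only [avgChannel, hU, Finset.sum_const, Finset.card_univ, ← Nat.cast_smul_eq_nsmul ℂ,
    smul_smul]
  rw [inv_mul_cancel₀ hcard, one_smul]

lemma cesaro {f : Matrix (Fin d) (Fin d) ℂ → Matrix (Fin d) (Fin d) ℂ}
    {ρ x : Matrix (Fin d) (Fin d) ℂ} (h1 : f ρ = x) (h2 : f x = x) :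
    Filter.Tendsto
      (fun n : ℕ => ((n + 1 : ℂ))⁻¹ • ∑ k ∈ Finset.range (n + 1), f^[k] ρ)
      Filter.atTop (nhds x) := by
  have hit : ∀ k : ℕ, f^[k + 1] ρ = x := by
    intro k
    induction k with
    | zero => simpa using h1
    | succ k ih => rw [Function.iterate_succ_apply', ih, h2]
  have hsum : ∀ n : ℕ, ∑ k ∈ Finset.range (n + 1), f^[k] ρ = ρ + (n : ℂ) • x := by
    intro n
    rw [Finset.sum_range_succ']
    simp only [hit, Finset.sum_const, Finset.card_range, Function.iterate_zero_apply]
    rw [add_comm, ← Nat.cast_smul_eq_nsmul ℂ]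
  have heq : (fun n : ℕ => ((n + 1 : ℂ))⁻¹ • ∑ k ∈ Finset.range (n + 1), f^[k] ρ)
      = fun n : ℕ => x + ((n : ℂ) + 1)⁻¹ • (ρ - x) := by
    funext n
    have hn : ((n : ℂ) + 1) ≠ 0 := Nat.cast_add_one_ne_zero n
    rw [hsum]
    match_scalars <;> field_simp <;> ring
  rw [heq]
  have hr : Filter.Tendsto (fun n : ℕ => ((n : ℝ) + 1)⁻¹) atTop (nhds 0) := by
    simpa [one_div] using tendsto_one_div_add_atTop_nhds_zero_nat (𝕜 := ℝ)
  have hc' : Filter.Tendsto (fun n : ℕ => ((n : ℂ) + 1)⁻¹) atTop (nhds 0) := by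
    have h2 := (Complex.continuous_ofReal.tendsto 0).comp hr
    have heq2 : (fun n : ℕ => ((n : ℂ) + 1)⁻¹)
        = Complex.ofReal ∘ (fun n : ℕ => ((n : ℝ) + 1)⁻¹) := by
      funext n
      simp only [Function.comp_apply, Complex.ofReal_inv]
      push_cast
      ring
    rw [heq2]
    simpa using h2
  have := hc'.smul_const (ρ - x)
  simpa using tendsto_const_nhds.add this

end Aux

lemma proj_single {d : ℕ} (i : Fin d) :
    proj (Pi.single i (1:ℂ)) = Matrix.single i i (1 : ℂ) := by
  ext k l
  simp only [proj, Matrix.vecMulVec_apply, Pi.star_apply, Pi.single_apply,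
    Matrix.single, Matrix.of_apply]
  by_cases hk : k = i <;> by_cases hl : l = i <;> simp_all [eq_comm]

lemma proj_single_add_single {d : ℕ} {i j : Fin d} (hij : i ≠ j) :
    proj (Pi.single i (1:ℂ) + Pi.single j 1)
    = Matrix.single i i 1 + Matrix.single j j 1
      + Matrix.single i j 1 + Matrix.single j i 1 := by
  ext k l
  simp only [proj, Matrix.vecMulVec_apply, Pi.star_apply, Pi.add_apply,
    Pi.single_apply, Matrix.add_apply, Matrix.single, Matrix.of_apply]
  by_cases hk : k = i <;> by_cases hk' : k = j <;> by_cases hl : l = i <;>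
    by_cases hl' : l = j <;> simp_all [eq_comm]

lemma proj_single_add_single_I {d : ℕ} {i j : Fin d} (hij : i ≠ j) :
    proj (Pi.single i (1:ℂ) + Pi.single j Complex.I)
    = Matrix.single i i 1 + Matrix.single j j 1
      + (-Complex.I) • Matrix.single i j 1
      + Complex.I • Matrix.single j i 1 := by
  ext k l
  simp only [proj, Matrix.vecMulVec_apply, Pi.star_apply, Pi.add_apply,
    Pi.single_apply, Matrix.add_apply, Matrix.smul_apply, Matrix.single,
    Matrix.of_apply, smul_eq_mul]
  by_cases hk : k = i <;> by_cases hk' : k = j <;> by_cases hl : l = i <;>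
    by_cases hl' : l = j <;> simp_all [Complex.star_def, eq_comm]

theorem stmt14 {d : ℕ} (hd : 0 < d) (G : Subgroup (Matrix.unitaryGroup (Fin d) ℂ))
    [Fintype G] :
    (∃ ρstar : Matrix (Fin d) (Fin d) ℂ, IsDensity ρstar ∧
      ∀ ρ : Matrix (Fin d) (Fin d) ℂ, IsDensity ρ →
        Filter.Tendsto
          (fun n : ℕ => ((n + 1 : ℂ))⁻¹ • ∑ k ∈ Finset.range (n + 1), (avgChannel G)^[k] ρ)
          Filter.atTop (nhds ρstar)) ↔
    (∀ a : Matrix (Fin d) (Fin d) ℂ,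
      avgChannel G a = (a.trace / d) • (1 : Matrix (Fin d) (Fin d) ℂ)) := by
  have hdC : (d : ℂ) ≠ 0 := Nat.cast_ne_zero.mpr hd.ne'
  have hLa : ∀ x, avgChannel G x = avgL G x := fun _ => rfl
  -- `(d : ℂ)⁻¹ • 1` is a density matrix
  have hone_psd : ((d : ℂ)⁻¹ • (1 : Matrix (Fin d) (Fin d) ℂ)).PosSemidef := by
    have h := Matrix.posSemidef_conjTranspose_mul_self
      (((Real.sqrt d : ℝ) : ℂ)⁻¹ • (1 : Matrix (Fin d) (Fin d) ℂ))
    have heq : ((((Real.sqrt d : ℝ) : ℂ)⁻¹ • (1 : Matrix (Fin d) (Fin d) ℂ))ᴴ *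
        ((((Real.sqrt d : ℝ) : ℂ))⁻¹ • (1 : Matrix (Fin d) (Fin d) ℂ)))
        = (d : ℂ)⁻¹ • 1 := by
      rw [Matrix.conjTranspose_smul, Matrix.conjTranspose_one, Matrix.smul_mul,
        Matrix.mul_smul, one_mul, smul_smul]
      congr 1
      rw [star_inv₀, Complex.star_def, Complex.conj_ofReal, ← mul_inv, ← Complex.ofReal_mul,
        Real.mul_self_sqrt (Nat.cast_nonneg d)]
      norm_num
    rwa [heq] at h
  have hone_density : IsDensity ((d : ℂ)⁻¹ • (1 : Matrix (Fin d) (Fin d) ℂ)) := by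
    refine ⟨hone_psd, ?_⟩
    rw [Matrix.trace_smul, Matrix.trace_one]
    simp only [smul_eq_mul, Fintype.card_fin]
    exact inv_mul_cancel₀ hdC
  constructor
  · -- ergodic → depolarizing
    rintro ⟨ρstar, hρd, hconv⟩
    have hfix : ∀ ρ, IsDensity ρ → avgChannel G ρ = ρstar := by
      intro ρ hρ
      exact tendsto_nhds_unique (cesaro rfl (avg_idem G ρ)) (hconv ρ hρ)
    have hstar : ρstar = (d : ℂ)⁻¹ • 1 := by
      rw [← hfix _ hone_density]
      calc avgChannel G ((d : ℂ)⁻¹ • 1) = (d : ℂ)⁻¹ • avgChannel G 1 := by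
            rw [hLa, hLa, _root_.map_smul]
        _ = (d : ℂ)⁻¹ • 1 := by rw [avg_one]
    -- projections
    have hproj : ∀ ξ : Fin d → ℂ, avgChannel G (proj ξ) = (((proj ξ).trace) / d) • 1 := by
      intro ξ
      by_cases hξ : ξ = 0
      · subst hξ
        have h0 : proj (0 : Fin d → ℂ) = 0 := by
          ext i j; simp [proj, Matrix.vecMulVec_apply]
        rw [h0, hLa, _root_.map_zero]
        simp
      · set r : ℝ := ∑ i, Complex.normSq (ξ i) with hr
        have hrpos : 0 < r := by
          obtain ⟨i, hi⟩ := Function.ne_iff.mp hξ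
          refine Finset.sum_pos' (fun j _ => Complex.normSq_nonneg _)
            ⟨i, Finset.mem_univ i, ?_⟩
          simpa [Complex.normSq_pos] using hi
        have hrC : ((r : ℂ)) ≠ 0 := by exact_mod_cast hrpos.ne'
        have htr : (proj ξ).trace = (r : ℂ) := by
          simp only [proj, Matrix.trace, Matrix.diag_apply, Matrix.vecMulVec_apply,
            Pi.star_apply, Complex.star_def, Complex.mul_conj, hr]
          push_cast
          rfl
        have hps : ∀ ξ' : Fin d → ℂ, (proj ξ').PosSemidef := by
          intro ξ'
          have hcol : proj ξ' = Matrix.replicateCol Unit ξ' * (Matrix.replicateCol Unit ξ')ᴴ := by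
            rw [Matrix.conjTranspose_replicateCol, proj, Matrix.vecMulVec_eq Unit]
          rw [hcol]
          exact Matrix.posSemidef_self_mul_conjTranspose _
        have hss : ((Real.sqrt r : ℝ) : ℂ)⁻¹ * ((Real.sqrt r : ℝ) : ℂ)⁻¹ = ((r : ℂ))⁻¹ := by
          rw [← mul_inv, ← Complex.ofReal_mul, Real.mul_self_sqrt hrpos.le]
        have hsc : ((r : ℂ))⁻¹ • proj ξ = proj ((((Real.sqrt r : ℝ) : ℂ))⁻¹ • ξ) := by
          ext i j
          simp only [proj, Matrix.smul_apply, Matrix.vecMulVec_apply, Pi.star_apply,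
            Pi.smul_apply, smul_eq_mul, Complex.star_def, _root_.map_mul, map_inv₀,
            Complex.conj_ofReal]
          rw [← hss]
          ring
        have hdens : IsDensity (((r : ℂ))⁻¹ • proj ξ) := by
          constructor
          · rw [hsc]; exact hps _
          · rw [Matrix.trace_smul, htr, smul_eq_mul, inv_mul_cancel₀ hrC]
        have hfx := hfix _ hdens
        rw [hLa, _root_.map_smul, ← hLa, hstar] at hfx
        calc avgChannel G (proj ξ)
            = (r : ℂ) • (((r : ℂ))⁻¹ • avgChannel G (proj ξ)) := by
              rw [smul_smul, mul_inv_cancel₀ hrC, one_smul]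
          _ = (r : ℂ) • ((d : ℂ)⁻¹ • 1) := by rw [hfx]
          _ = (((proj ξ).trace) / d) • 1 := by
              rw [htr, smul_smul, div_eq_mul_inv]
    -- diagonal basis matrices
    have hEii : ∀ i : Fin d, proj (Pi.single i (1:ℂ)) = Matrix.single i i (1 : ℂ) :=
      proj_single
    have hdiag : ∀ i : Fin d, avgChannel G (Matrix.single i i (1 : ℂ))
        = ((1 : ℂ) / d) • 1 := by
      intro i
      rw [← hEii i, hproj]
      congr 2
      rw [hEii i, Matrix.trace_single_eq_same]
    -- all basis matrices
    have hE : ∀ i j : Fin d, avgChannel G (Matrix.single i j (1 : ℂ))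
        = ((Matrix.single i j (1 : ℂ)).trace / d) • 1 := by
      intro i j
      by_cases hij : i = j
      · subst hij
        rw [hdiag i, Matrix.trace_single_eq_same]
      · have hv1 := proj_single_add_single hij
        have hv2 := proj_single_add_single_I hij
        have e1 := hproj (Pi.single i (1:ℂ) + Pi.single j 1)
        have e2 := hproj (Pi.single i (1:ℂ) + Pi.single j Complex.I)
        rw [hv1] at e1
        rw [hv2] at e2
        have hji : (j : Fin d) ≠ i := fun h => hij h.symm
        have t1 : (Matrix.single i i (1:ℂ) + Matrix.single j j 1
            + Matrix.single i j 1 + Matrix.single j i 1).trace = 2 := by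
          rw [Matrix.trace_add, Matrix.trace_add, Matrix.trace_add,
            Matrix.trace_single_eq_same, Matrix.trace_single_eq_same,
            Matrix.trace_single_eq_of_ne i j 1 (Ne.symm hji),
            Matrix.trace_single_eq_of_ne j i 1 (Ne.symm hij)]
          norm_num
        have t2 : (Matrix.single i i (1:ℂ) + Matrix.single j j 1
            + (-Complex.I) • Matrix.single i j 1
            + Complex.I • Matrix.single j i 1).trace = 2 := by
          rw [Matrix.trace_add, Matrix.trace_add, Matrix.trace_add,
            Matrix.trace_single_eq_same, Matrix.trace_single_eq_same,
            Matrix.trace_smul, Matrix.trace_smul,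
            Matrix.trace_single_eq_of_ne i j 1 (Ne.symm hji),
            Matrix.trace_single_eq_of_ne j i 1 (Ne.symm hij)]
          norm_num
        rw [t1] at e1
        rw [t2] at e2
        rw [hLa, _root_.map_add, _root_.map_add, _root_.map_add, ← hLa, ← hLa, ← hLa, ← hLa, hdiag, hdiag] at e1
        rw [hLa, _root_.map_add, _root_.map_add, _root_.map_add, _root_.map_smul, _root_.map_smul,
          ← hLa, ← hLa, ← hLa, ← hLa, hdiag, hdiag] at e2
        set A := avgChannel G (Matrix.single i j (1:ℂ)) with hA
        set B := avgChannel G (Matrix.single j i (1:ℂ)) with hB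
        have hsplit : ((2 : ℂ) / d) • (1 : Matrix (Fin d) (Fin d) ℂ)
            = ((1 : ℂ) / d) • 1 + ((1 : ℂ) / d) • 1 := by
          rw [← add_smul]; congr 1; ring
        rw [hsplit] at e1 e2
        have hAB : A + B = 0 := by
          have h' : A + B = (((1:ℂ)/d) • (1 : Matrix (Fin d) (Fin d) ℂ) + ((1:ℂ)/d) • 1 + A + B)
              - (((1:ℂ)/d) • 1 + ((1:ℂ)/d) • 1) := by abel
          rw [h', e1, sub_self]
        have hAB2 : (-Complex.I) • A + Complex.I • B = 0 := by
          have h' : (-Complex.I) • A + Complex.I • B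
              = (((1:ℂ)/d) • (1 : Matrix (Fin d) (Fin d) ℂ) + ((1:ℂ)/d) • 1
                + (-Complex.I) • A + Complex.I • B)
              - (((1:ℂ)/d) • 1 + ((1:ℂ)/d) • 1) := by abel
          rw [h', e2, sub_self]
        have hBA : B = -A := by
          rw [add_comm] at hAB
          exact eq_neg_of_add_eq_zero_left hAB
        have hA0 : A = 0 := by
          rw [hBA, smul_neg] at hAB2
          have h2 : (-(2 * Complex.I)) • A = 0 := by
            rw [← hAB2]; module
          rcases smul_eq_zero.mp h2 with h | h
          · exfalso
            apply Complex.I_ne_zero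
            have : (2:ℂ) * Complex.I = 0 := by
              have := neg_eq_zero.mp h
              exact this
            rcases mul_eq_zero.mp this with h' | h'
            · norm_num at h'
            · exact h'
          · exact h
        rw [hA0, Matrix.trace_single_eq_of_ne i j 1 (Ne.symm hji)]
        simp
    -- conclude by linearity
    intro a
    conv_lhs => rw [Matrix.matrix_eq_sum_single a]
    rw [hLa, _root_.map_sum]
    have hterm : ∀ i : Fin d, (avgL G) (∑ j, Matrix.single i j (a i j))
        = (a i i / d) • 1 := by
      intro i
      rw [_root_.map_sum]
      have hj : ∀ j : Fin d, (avgL G) (Matrix.single i j (a i j))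
          = if j = i then (a i i / d) • 1 else 0 := by
        intro j
        have : Matrix.single i j (a i j) = (a i j) • Matrix.single i j 1 := by
          rw [Matrix.smul_single, smul_eq_mul, mul_one]
        rw [this, _root_.map_smul, ← hLa, hE i j]
        by_cases hji : j = i
        · subst hji
          rw [Matrix.trace_single_eq_same, if_pos rfl, smul_smul]
          ring_nf
        · rw [Matrix.trace_single_eq_of_ne i j 1 (Ne.symm hji), if_neg hji]
          simp
      simp only [hj]
      simp
    simp only [hterm]
    rw [← Finset.sum_smul]
    congr 1
    rw [Matrix.trace]
    simp only [Matrix.diag_apply]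
    rw [Finset.sum_div]
  · -- depolarizing → ergodic
    intro hdep
    refine ⟨(d : ℂ)⁻¹ • 1, hone_density, ?_⟩
    intro ρ hρ
    apply cesaro
    · rw [hdep, hρ.2, one_div]
    · rw [hdep, Matrix.trace_smul, Matrix.trace_one]
      simp only [smul_eq_mul, Fintype.card_fin]
      rw [inv_mul_cancel₀ hdC, one_div]
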